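/- Let G = (V,E) be a bi-directed (simple) graph. A strictly positive discrete distribution p satisfies the connected set Markov property for G (i.e., for every disconnected vertex set D with components C_1,...,C_r, the marginal p_D factorizes as ∏_k p_{C_k}) if and only if its multivariate logistic parameters satisfy η^M = 0 for every M in the family D of disconnected sets of G. -/

import Mathlib

/-! If `p_M` factorizes over the components of `M`, then `log p_M` is a sum of functions each
ignoring some coordinate of `M`, and the top Möbius interaction of such a function vanishes.

Conversely, to split `p_{A ∪ B}` for separated `A` and `B`, compare `p` with the law `q` under
which the `A`-coordinates and the others are independent. By induction on `D`, `p_M = q_M` for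
`M ⊂ D`, so `p` and `q` integrate every proper Möbius component of `g = log p_D - log q_D` alike,
while its top component is `η^D = 0`. Hence `∑ (p - q) g = 0`: the symmetrised Kullback–Leibler
divergence of `p_D` and `q_D` vanishes, which forces `p_D = q_D`. -/

open Finset

/-- The marginal distribution of `p` over the margin `M`, as a function of a full cell
depending only on its `M`-coordinates. -/
noncomputable def marg {V : Type*} [Fintype V] [DecidableEq V] {b : V → ℕ}
    (p : ((v : V) → Fin (b v)) → ℝ) (M : Finset V) (i : (v : V) → Fin (b v)) : ℝ :=
  ∑ k : (v : V) → Fin (b v), if ∀ v ∈ M, k v = i v then p k else 0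

/-- The multivariate logistic parameter `η^M = λ^M_M`: the highest-order log-linear
interaction of the marginal distribution `p_M`, obtained by Möbius inversion of
`log p_M` with baseline cell `(0,...,0)`. -/
noncomputable def mlogit {V : Type*} [Fintype V] [DecidableEq V] {b : V → ℕ}
    (hb : ∀ v, 0 < b v) (p : ((v : V) → Fin (b v)) → ℝ)
    (M : Finset V) (i : (v : V) → Fin (b v)) : ℝ :=
  ∑ L ∈ M.powerset, (-1 : ℝ) ^ (M.card - L.card) *
    Real.log (marg p M (fun v => if v ∈ L then i v else ⟨0, hb v⟩))

/-- The connected set Markov property for a graph `G`: for every disconnected vertex set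
`D` with connected components `C 0, ..., C (r-1)` (a family of at least two nonempty,
pairwise disjoint connected sets covering `D` with no edges of `G` between distinct
members), the marginal over `D` factorizes into the product of the marginals over the
components. -/
def CSMP {V : Type*} [Fintype V] [DecidableEq V] {b : V → ℕ} (G : SimpleGraph V)
    (p : ((v : V) → Fin (b v)) → ℝ) : Prop :=
  ∀ (D : Finset V) (r : ℕ) (C : Fin r → Finset V), 2 ≤ r →
    (∀ k, (C k).Nonempty) →
    (∀ k, (G.induce ((C k : Finset V) : Set V)).Connected) →
    (∀ j k, j ≠ k → Disjoint (C j) (C k)) →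
    (∀ j k, j ≠ k → ∀ u ∈ C j, ∀ v ∈ C k, ¬ G.Adj u v) →
    D = Finset.univ.biUnion C →
    ∀ i, marg p D i = ∏ k, marg p (C k) i

section Mobius

variable {ι R : Type*} [DecidableEq ι] [CommRing R]

def powersetMobius (φ : Finset ι → R) (M : Finset ι) : R :=
  ∑ L ∈ M.powerset, (-1 : R) ^ (#M - #L) * φ L

theorem powersetMobius_insert {a : ι} {M : Finset ι} (ha : a ∉ M) (φ : Finset ι → R) :
    powersetMobius φ (insert a M) =
      powersetMobius (fun L => φ (insert a L)) M - powersetMobius φ M := by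
  simp only [powersetMobius, sum_powerset_insert ha, card_insert_of_notMem ha]
  rw [sub_eq_neg_add, ← sum_neg_distrib]
  congr 1
  · refine sum_congr rfl fun L hL => ?_
    rw [Nat.succ_sub (card_le_card (mem_powerset.1 hL)), pow_succ]
    ring
  · refine sum_congr rfl fun L hL => ?_
    rw [card_insert_of_notMem fun h => ha (mem_powerset.1 hL h), Nat.add_sub_add_right]

theorem sum_powersetMobius (φ : Finset ι → R) (S : Finset ι) :
    ∑ M ∈ S.powerset, powersetMobius φ M = φ S := by
  induction S using Finset.induction_on generalizing φ with
  | empty => simp [powersetMobius]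
  | insert a S ha ih =>
    rw [sum_powerset_insert ha, sum_congr rfl fun M hM =>
      powersetMobius_insert (fun h => ha (mem_powerset.1 hM h)) φ, sum_sub_distrib, ih, ih]
    ring

variable {V : Type*} [DecidableEq V] {α : V → Type*}

def mobius (o : ∀ v, α v) (M : Finset V) : ((∀ v, α v) → R) →ₗ[R] (∀ v, α v) → R where
  toFun f i := powersetMobius (fun L => f (L.piecewise i o)) M
  map_add' f g := by ext i; simp [powersetMobius, mul_add, sum_add_distrib]
  map_smul' c f := by ext i; simp [powersetMobius, mul_sum, mul_left_comm]

variable (o : ∀ v, α v)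

theorem mobius_apply (M : Finset V) (f : (∀ v, α v) → R) (i : ∀ v, α v) :
    mobius o M f i = powersetMobius (fun L => f (L.piecewise i o)) M := rfl

theorem dependsOn_mobius (M : Finset V) (f : (∀ v, α v) → R) :
    DependsOn (mobius o M f) (M : Set V) := by
  intro i i' h
  refine sum_congr rfl fun L hL => ?_
  simp only [L.piecewise_congr (fun v hv => h v (mem_powerset.1 hL hv)) fun _ _ => rfl]

theorem mobius_eq_zero_of_dependsOn {f : (∀ v, α v) → R} {T : Set V} (hf : DependsOn f T)
    {M : Finset V} {v : V} (hvM : v ∈ M) (hvT : v ∉ T) : mobius o M f = 0 := by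
  ext i
  have hins : ∀ L : Finset V, f ((insert v L).piecewise i o) = f (L.piecewise i o) :=
    fun L => hf fun u hu => piecewise_insert_of_ne _ _ _ fun h => hvT (h ▸ hu)
  rw [mobius_apply, ← insert_erase hvM, powersetMobius_insert (notMem_erase v M)]
  simp only [hins, sub_self, Pi.zero_apply]

theorem sum_mobius_of_dependsOn {f : (∀ v, α v) → R} {S : Finset V}
    (hf : DependsOn f (S : Set V)) (i : ∀ v, α v) :
    ∑ M ∈ S.powerset, mobius o M f i = f i := by
  simp only [mobius_apply, sum_powersetMobius]
  exact hf fun v hv => piecewise_eq_of_mem _ _ _ hv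

end Mobius

section Marginal

variable {V : Type*} [Fintype V] [DecidableEq V] {b : V → ℕ}

noncomputable def logMarg (p : ((v : V) → Fin (b v)) → ℝ) (M : Finset V)
    (i : (v : V) → Fin (b v)) : ℝ :=
  Real.log (marg p M i)

theorem dependsOn_marg (p : ((v : V) → Fin (b v)) → ℝ) (T : Finset V) :
    DependsOn (marg p T) (T : Set V) := by
  intro i i' h
  refine sum_congr rfl fun k _ => if_congr ?_ rfl rfl
  exact forall₂_congr fun v hv => by rw [h v hv]

theorem dependsOn_logMarg (p : ((v : V) → Fin (b v)) → ℝ) (T : Finset V) :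
    DependsOn (logMarg p T) (T : Set V) :=
  fun _ _ h => congrArg Real.log (dependsOn_marg p T h)

theorem marg_pos {p : ((v : V) → Fin (b v)) → ℝ} (hpos : ∀ k, 0 < p k) (T : Finset V)
    (i : (v : V) → Fin (b v)) : 0 < marg p T i :=
  sum_pos' (fun k _ => by split_ifs <;> simp [(hpos k).le]) ⟨i, mem_univ _, by simp [hpos i]⟩

theorem marg_empty (p : ((v : V) → Fin (b v)) → ℝ) (i : (v : V) → Fin (b v)) :
    marg p ∅ i = ∑ k, p k := by
  simp [marg]

theorem sum_mul_eq_sum_marg_mul (p : ((v : V) → Fin (b v)) → ℝ) (o : (v : V) → Fin (b v))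
    {T : Finset V} {φ : ((v : V) → Fin (b v)) → ℝ} (hφ : DependsOn φ (T : Set V)) :
    ∑ k, p k * φ k = ∑ j ∈ univ.image (T.piecewise · o), marg p T j * φ j := by
  rw [← sum_fiberwise_of_maps_to (g := (T.piecewise · o)) fun k _ =>
    mem_image_of_mem _ (mem_univ k)]
  refine sum_congr rfl fun j hj => ?_
  obtain ⟨k₀, -, rfl⟩ := mem_image.1 hj
  simp only [marg, sum_mul, ite_mul, zero_mul]
  rw [← sum_filter]
  refine sum_congr (ext fun k => ?_) fun k hk => ?_
  · simp only [mem_filter, mem_univ, true_and]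
    constructor
    · intro h v hv
      rw [← h, piecewise_eq_of_mem _ _ _ hv]
    · intro h
      exact T.piecewise_congr (fun v hv => (h v hv).trans (piecewise_eq_of_mem _ _ _ hv))
        fun _ _ => rfl
  · rw [hφ fun v hv => (mem_filter.1 hk).2 v hv]

theorem sum_sub_mul_eq_sum_marg_sub_mul (p q : ((v : V) → Fin (b v)) → ℝ)
    (o : (v : V) → Fin (b v)) {T : Finset V} {φ : ((v : V) → Fin (b v)) → ℝ}
    (hφ : DependsOn φ (T : Set V)) :
    ∑ k, (p k - q k) * φ k =
      ∑ j ∈ univ.image (T.piecewise · o), (marg p T j - marg q T j) * φ j := by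
  simp only [sub_mul, sum_sub_distrib, sum_mul_eq_sum_marg_mul _ o hφ]

theorem sum_sub_mul_eq_zero_of_marg_eq {p q : ((v : V) → Fin (b v)) → ℝ} {T : Finset V}
    (h : marg p T = marg q T) {φ : ((v : V) → Fin (b v)) → ℝ} (hφ : DependsOn φ (T : Set V)) :
    ∑ k, (p k - q k) * φ k = 0 := by
  rcases isEmpty_or_nonempty ((v : V) → Fin (b v)) with hempty | ⟨⟨o⟩⟩
  · simp
  simp [sum_sub_mul_eq_sum_marg_sub_mul p q o hφ, h]

theorem sum_sub_mul_eq_zero_of_mobius_eq_zero {p q : ((v : V) → Fin (b v)) → ℝ}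
    (o : (v : V) → Fin (b v)) {D : Finset V} {g : ((v : V) → Fin (b v)) → ℝ}
    (hg : DependsOn g (D : Set V)) (htop : mobius o D g = 0)
    (hmarg : ∀ M ⊂ D, marg p M = marg q M) :
    ∑ k, (p k - q k) * g k = 0 := by
  have hcomponent : ∀ M ∈ D.powerset, ∑ k, (p k - q k) * mobius o M g k = 0 := by
    intro M hM
    rcases eq_or_ne M D with rfl | hMD
    · simp [htop]
    exact sum_sub_mul_eq_zero_of_marg_eq
      (hmarg M (ssubset_of_subset_of_ne (mem_powerset.1 hM) hMD)) (dependsOn_mobius o M g)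
  calc ∑ k, (p k - q k) * g k
      = ∑ k, (p k - q k) * ∑ M ∈ D.powerset, mobius o M g k := by
        simp only [sum_mobius_of_dependsOn o hg]
    _ = ∑ M ∈ D.powerset, ∑ k, (p k - q k) * mobius o M g k := by
        simp only [mul_sum]
        exact sum_comm
    _ = 0 := sum_eq_zero hcomponent

theorem sub_mul_log_sub_log_nonneg {x y : ℝ} (hx : 0 < x) (hy : 0 < y) :
    0 ≤ (x - y) * (Real.log x - Real.log y) := by
  rcases le_total x y with h | h
  · exact mul_nonneg_of_nonpos_of_nonpos (sub_nonpos.2 h) (sub_nonpos.2 (Real.log_le_log hx h))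
  · exact mul_nonneg (sub_nonneg.2 h) (sub_nonneg.2 (Real.log_le_log hy h))

theorem marg_eq_of_sum_sub_mul_logMarg_eq_zero {p q : ((v : V) → Fin (b v)) → ℝ}
    {T : Finset V}
    (hp : ∀ j, 0 < marg p T j) (hq : ∀ j, 0 < marg q T j)
    (h : ∑ k, (p k - q k) * (logMarg p T k - logMarg q T k) = 0) : marg p T = marg q T := by
  ext i
  have hφ : DependsOn (fun k => logMarg p T k - logMarg q T k) (T : Set V) :=
    fun _ _ h => by simp only [dependsOn_logMarg p T h, dependsOn_logMarg q T h]
  rw [sum_sub_mul_eq_sum_marg_sub_mul p q i hφ] at h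
  have hi : i ∈ univ.image (T.piecewise · i) := mem_image.2 ⟨i, mem_univ _, piecewise_same _ _⟩
  have h0 := (sum_eq_zero_iff_of_nonneg fun j _ =>
    sub_mul_log_sub_log_nonneg (hp j) (hq j)).1 h i hi
  rcases mul_eq_zero.1 h0 with h0 | h0
  · exact sub_eq_zero.1 h0
  · exact Real.log_injOn_pos (hp i) (hq i) (sub_eq_zero.1 h0)

theorem mobius_logMarg_eq_zero_of_marg_eq_prod {p : ((v : V) → Fin (b v)) → ℝ}
    (hpos : ∀ k, 0 < p k) (o : (v : V) → Fin (b v))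
    {ι : Type*} (s : Finset ι) (C : ι → Finset V) {M : Finset V}
    (hfac : marg p M = ∏ k ∈ s, marg p (C k)) (hC : ∀ k ∈ s, ¬ M ⊆ C k) :
    mobius o M (logMarg p M) = 0 := by
  have hlog : logMarg p M = ∑ k ∈ s, logMarg p (C k) := by
    ext j
    simp only [logMarg, hfac, Finset.prod_apply, Finset.sum_apply]
    exact Real.log_prod fun k _ => (marg_pos hpos _ j).ne'
  rw [hlog, map_sum]
  refine sum_eq_zero fun k hk => ?_
  obtain ⟨v, hvM, hvC⟩ := not_subset.1 (hC k hk)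
  exact mobius_eq_zero_of_dependsOn o (dependsOn_logMarg p _) hvM (by simpa using hvC)

end Marginal

section Factorization

variable {V : Type*} [Fintype V] [DecidableEq V] {b : V → ℕ}

/-- The law of `A.piecewise k l` for independent draws `k` and `l` from `p`. -/
noncomputable def piecewiseLaw (p : ((v : V) → Fin (b v)) → ℝ) (A : Finset V)
    (c : (v : V) → Fin (b v)) : ℝ :=
  ∑ k, ∑ l, if A.piecewise k l = c then p k * p l else 0

theorem marg_piecewiseLaw (p : ((v : V) → Fin (b v)) → ℝ) (A M : Finset V)
    (c : (v : V) → Fin (b v)) :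
    marg (piecewiseLaw p A) M c = marg p (M ∩ A) c * marg p (M \ A) c := by
  have hsplit : ∀ k l : (v : V) → Fin (b v), (∀ v ∈ M, A.piecewise k l v = c v) ↔
      (∀ v ∈ M ∩ A, k v = c v) ∧ ∀ v ∈ M \ A, l v = c v := by
    intro k l
    simp only [mem_inter, mem_sdiff, and_imp]
    refine ⟨fun h => ⟨fun v hv hvA => ?_, fun v hv hvA => ?_⟩, fun h v hv => ?_⟩
    · simpa [hvA] using h v hv
    · simpa [hvA] using h v hv
    · by_cases hvA : v ∈ A
      · simpa [hvA] using h.1 v hv hvA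
      · simpa [hvA] using h.2 v hv hvA
  calc marg (piecewiseLaw p A) M c
      = ∑ k, ∑ l, if ∀ v ∈ M, A.piecewise k l v = c v then p k * p l else 0 := by
        simp only [marg, piecewiseLaw, ite_sum_zero]
        rw [sum_comm]
        refine sum_congr rfl fun k _ => ?_
        rw [sum_comm]
        refine sum_congr rfl fun l _ => ?_
        rw [sum_eq_single (A.piecewise k l) (fun c' _ hc' => by simp [Ne.symm hc']) (by simp)]
        simp
    _ = marg p (M ∩ A) c * marg p (M \ A) c := by
        simp only [marg, sum_mul_sum, ite_zero_mul_ite_zero, hsplit]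

theorem marg_eq_marg_piecewiseLaw {p : ((v : V) → Fin (b v)) → ℝ} (hpos : ∀ k, 0 < p k)
    (hsum : ∑ k, p k = 1) (o : (v : V) → Fin (b v)) (A D : Finset V)
    (hη : ∀ M ⊆ D, (M ∩ A).Nonempty → (M \ A).Nonempty → mobius o M (logMarg p M) = 0) :
    marg p D = marg (piecewiseLaw p A) D := by
  induction D using Finset.strongInduction with
  | H D ih =>
  set q := piecewiseLaw p A
  have hq : marg q D = marg p (D ∩ A) * marg p (D \ A) := funext (marg_piecewiseLaw p A D)
  have hmarg_empty : marg p ∅ = 1 := funext fun i => (marg_empty p i).trans hsum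
  rcases (D ∩ A).eq_empty_or_nonempty with hDA | hDA
  · rw [hq, hDA, hmarg_empty, one_mul,
      sdiff_eq_self_of_disjoint (disjoint_iff_inter_eq_empty.2 hDA)]
  rcases (D \ A).eq_empty_or_nonempty with hDA' | hDA'
  · rw [hq, hDA', hmarg_empty, mul_one, inter_eq_left.2 (sdiff_eq_empty_iff_subset.1 hDA')]
  have hqpos : ∀ j, 0 < marg q D j := by
    rw [hq]; exact fun j => mul_pos (marg_pos hpos _ j) (marg_pos hpos _ j)
  refine marg_eq_of_sum_sub_mul_logMarg_eq_zero (marg_pos hpos D) hqpos ?_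
  set g := logMarg p D - logMarg q D
  have hg : DependsOn g (D : Set V) := fun _ _ h => by
    simp only [g, Pi.sub_apply, dependsOn_logMarg p D h, dependsOn_logMarg q D h]
  have hlogq : logMarg q D = logMarg p (D ∩ A) + logMarg p (D \ A) := by
    ext j
    simp only [logMarg, hq, Pi.mul_apply, Pi.add_apply]
    exact Real.log_mul (marg_pos hpos _ j).ne' (marg_pos hpos _ j).ne'
  have htop : mobius o D g = 0 := by
    obtain ⟨u, hu⟩ := hDA
    obtain ⟨w, hw⟩ := hDA'
    rw [map_sub, hη D subset_rfl ⟨u, hu⟩ ⟨w, hw⟩, hlogq, map_add,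
      mobius_eq_zero_of_dependsOn o (dependsOn_logMarg p _) (mem_sdiff.1 hw).1
        (by simpa using fun _ => (mem_sdiff.1 hw).2),
      mobius_eq_zero_of_dependsOn o (dependsOn_logMarg p _) (mem_inter.1 hu).1
        (by simpa using fun _ => (mem_inter.1 hu).2)]
    simp
  exact sum_sub_mul_eq_zero_of_mobius_eq_zero o hg htop fun M hMD =>
    ih M hMD fun M' hM' => hη M' (hM'.trans hMD.subset)

end Factorization

theorem not_connected_induce_of_forall_not_adj {V : Type*} {G : SimpleGraph V} {s t : Set V}
    (hin : (s ∩ t).Nonempty) (hout : (s \ t).Nonempty)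
    (hadj : ∀ u ∈ s ∩ t, ∀ v ∈ s \ t, ¬ G.Adj u v) : ¬ (G.induce s).Connected := by
  intro hconn
  obtain ⟨x, hxs, hxt⟩ := hin
  obtain ⟨y, hys, hyt⟩ := hout
  obtain ⟨w⟩ := hconn.preconnected ⟨x, hxs⟩ ⟨y, hys⟩
  obtain ⟨d, -, hd₁, hd₂⟩ := w.exists_boundary_dart {z | z.1 ∈ t} hxt hyt
  exact hadj _ ⟨d.fst.2, hd₁⟩ _ ⟨d.snd.2, hd₂⟩ d.adj

section Graph

variable {V : Type*} [Fintype V] [DecidableEq V] {b : V → ℕ}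

theorem marg_union_eq_mul_of_forall_not_adj {G : SimpleGraph V}
    {p : ((v : V) → Fin (b v)) → ℝ} (hpos : ∀ k, 0 < p k) (hsum : ∑ k, p k = 1)
    (o : (v : V) → Fin (b v))
    (hη : ∀ M : Finset V, (M : Set V).Nonempty → ¬ (G.induce (M : Set V)).Connected →
      mobius o M (logMarg p M) = 0)
    {A B : Finset V} (hAB : Disjoint A B) (hadj : ∀ u ∈ A, ∀ v ∈ B, ¬ G.Adj u v) :
    marg p (A ∪ B) = marg p A * marg p B := by
  rw [marg_eq_marg_piecewiseLaw hpos hsum o A (A ∪ B) fun M hM hMA hMA' => ?_]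
  · ext c
    rw [marg_piecewiseLaw, union_inter_cancel_left, union_sdiff_cancel_left hAB, Pi.mul_apply]
  refine hη M (mod_cast hMA.mono inter_subset_left) (not_connected_induce_of_forall_not_adj
    (t := A) (mod_cast hMA) (mod_cast hMA') fun u hu v hv => hadj u hu.2 v ?_)
  exact (mem_union.1 (hM hv.1)).resolve_left hv.2

theorem marg_biUnion_eq_prod_of_forall_not_adj {G : SimpleGraph V}
    {p : ((v : V) → Fin (b v)) → ℝ} (hpos : ∀ k, 0 < p k) (hsum : ∑ k, p k = 1)
    (o : (v : V) → Fin (b v))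
    (hη : ∀ M : Finset V, (M : Set V).Nonempty → ¬ (G.induce (M : Set V)).Connected →
      mobius o M (logMarg p M) = 0)
    {ι : Type*} [DecidableEq ι] (s : Finset ι) (C : ι → Finset V)
    (hdisj : (s : Set ι).PairwiseDisjoint C)
    (hadj : ∀ j ∈ s, ∀ k ∈ s, j ≠ k → ∀ u ∈ C j, ∀ v ∈ C k, ¬ G.Adj u v) :
    marg p (s.biUnion C) = ∏ k ∈ s, marg p (C k) := by
  induction s using Finset.induction_on with
  | empty => ext i; simp [marg_empty, hsum]
  | insert a s ha ih =>
    rw [biUnion_insert, prod_insert ha, ← ih (hdisj.subset (by simp))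
      fun j hj k hk => hadj j (mem_insert_of_mem hj) k (mem_insert_of_mem hk)]
    refine marg_union_eq_mul_of_forall_not_adj hpos hsum o hη ?_ ?_
    · exact (disjoint_biUnion_right _ _ _).2 fun k hk =>
        hdisj (mem_insert_self a s) (mem_insert_of_mem hk) fun h => ha (h ▸ hk)
    · intro u hu v hv
      obtain ⟨k, hk, hvk⟩ := mem_biUnion.1 hv
      exact hadj a (mem_insert_self a s) k (mem_insert_of_mem hk) (fun h => ha (h ▸ hk))
        u hu v hvk

end Graph

section Components

variable {V : Type*} [Fintype V] [DecidableEq V] (G : SimpleGraph V) (M : Finset V)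

noncomputable def componentFinset (c : (G.induce (M : Set V)).ConnectedComponent) : Finset V :=
  open Classical in
  univ.filter fun v =>
    ∃ h : v ∈ (M : Set V), (G.induce (M : Set V)).connectedComponentMk ⟨v, h⟩ = c

variable {G M}

theorem mem_componentFinset {c : (G.induce (M : Set V)).ConnectedComponent} {v : V} :
    v ∈ componentFinset G M c ↔
      ∃ h : v ∈ (M : Set V), (G.induce (M : Set V)).connectedComponentMk ⟨v, h⟩ = c := by
  simp [componentFinset]

theorem connected_induce_componentFinset (c : (G.induce (M : Set V)).ConnectedComponent) :
    (G.induce (componentFinset G M c : Set V)).Connected := by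
  let f : c.toSimpleGraph →g G.induce (componentFinset G M c : Set V) :=
    { toFun := fun u => ⟨u.1.1, mem_componentFinset.2 ⟨u.1.2, u.2⟩⟩
      map_rel' := id }
  refine c.connected_toSimpleGraph.map f fun v => ?_
  obtain ⟨h, hc⟩ := mem_componentFinset.1 v.2
  exact ⟨⟨⟨v, h⟩, hc⟩, rfl⟩

theorem exists_fin_connectedComponents (hne : (M : Set V).Nonempty)
    (hnc : ¬ (G.induce (M : Set V)).Connected) :
    ∃ (r : ℕ) (C : Fin r → Finset V), 2 ≤ r ∧ (∀ k, (C k).Nonempty) ∧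
      (∀ k, (G.induce (C k : Set V)).Connected) ∧ (∀ j k, j ≠ k → Disjoint (C j) (C k)) ∧
      (∀ j k, j ≠ k → ∀ u ∈ C j, ∀ v ∈ C k, ¬ G.Adj u v) ∧ M = univ.biUnion C := by
  set H := G.induce (M : Set V)
  obtain ⟨r, ⟨e⟩⟩ := Finite.exists_equiv_fin H.ConnectedComponent
  have hnontriv : Nontrivial H.ConnectedComponent := by
    have : Nonempty (M : Set V) := hne.to_subtype
    have hpre : ¬ H.Preconnected := fun h => hnc ⟨h⟩
    simp only [SimpleGraph.Preconnected, not_forall] at hpre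
    obtain ⟨x, y, hxy⟩ := hpre
    exact ⟨⟨_, _, fun h => hxy (SimpleGraph.ConnectedComponent.exact h)⟩⟩
  refine ⟨r, fun k => componentFinset G M (e.symm k), ?_, fun k => ?_,
    fun k => connected_induce_componentFinset _, fun j k hjk => ?_, fun j k hjk => ?_, ?_⟩
  · exact Fin.nontrivial_iff_two_le.1 e.symm.nontrivial
  · obtain ⟨x, hx⟩ := (e.symm k).exists_rep
    exact ⟨x.1, mem_componentFinset.2 ⟨x.2, hx⟩⟩
  · refine disjoint_left.2 fun v hvj hvk => hjk (e.symm.injective ?_)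
    obtain ⟨_, hj⟩ := mem_componentFinset.1 hvj
    obtain ⟨_, hk⟩ := mem_componentFinset.1 hvk
    exact hj.symm.trans hk
  · intro u hu v hv hadj
    obtain ⟨hu', hj⟩ := mem_componentFinset.1 hu
    obtain ⟨hv', hk⟩ := mem_componentFinset.1 hv
    refine hjk (e.symm.injective ?_)
    rw [← hj, ← hk]
    exact SimpleGraph.ConnectedComponent.connectedComponentMk_eq_of_adj
      (G := H) (v := ⟨u, hu'⟩) (w := ⟨v, hv'⟩) hadj
  · ext v
    simp only [mem_biUnion, mem_univ, true_and]
    refine ⟨fun hv => ⟨e (H.connectedComponentMk ⟨v, hv⟩), ?_⟩, fun ⟨k, hk⟩ =>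
      (mem_componentFinset.1 hk).1⟩
    exact mem_componentFinset.2 ⟨hv, (e.symm_apply_apply _).symm⟩

end Components

/-- a strictly positive distribution satisfies the connected set Markov
property for `G` iff its multivariate logistic parameters `η^M` vanish for every
disconnected set `M` of `G`. -/
theorem stmt12 {V : Type*} [Fintype V] [DecidableEq V] {b : V → ℕ} (hb : ∀ v, 0 < b v)
    (G : SimpleGraph V) (p : ((v : V) → Fin (b v)) → ℝ)
    (hpos : ∀ i, 0 < p i) (hsum : ∑ i, p i = 1) :
    CSMP G p ↔
      (∀ M : Finset V, ((M : Set V)).Nonempty → ¬ (G.induce ((M : Finset V) : Set V)).Connected →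
        ∀ i, mlogit hb p M i = 0) := by
  set o : (v : V) → Fin (b v) := fun v => ⟨0, hb v⟩
  have hmlogit : ∀ M, mlogit hb p M = mobius o M (logMarg p M) := fun M => rfl
  constructor
  · intro hcsmp M hne hnc i
    obtain ⟨r, C, hr, hCne, hconn, hdis, hadj, rfl⟩ := exists_fin_connectedComponents hne hnc
    have hfac : marg p (univ.biUnion C) = ∏ k, marg p (C k) :=
      funext fun j => (hcsmp _ r C hr hCne hconn hdis hadj rfl j).trans (prod_apply ..).symm
    refine congrFun ((hmlogit _).trans
      (mobius_logMarg_eq_zero_of_marg_eq_prod hpos o univ C hfac fun k _ hsub => ?_)) i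
    have : Nontrivial (Fin r) := Fin.nontrivial_iff_two_le.2 hr
    obtain ⟨k', hk'⟩ := exists_ne k
    obtain ⟨v, hv⟩ := hCne k'
    exact disjoint_left.1 (hdis k' k hk') hv (hsub (mem_biUnion.2 ⟨k', mem_univ _, hv⟩))
  · intro hη D r C _ _ _ hdis hadj rfl i
    have hη' : ∀ M : Finset V, (M : Set V).Nonempty → ¬ (G.induce (M : Set V)).Connected →
        mobius o M (logMarg p M) = 0 := fun M hne hnc => by
      rw [← hmlogit]; exact funext (hη M hne hnc)
    rw [marg_biUnion_eq_prod_of_forall_not_adj hpos hsum o hη' univ C (fun j _ k _ => hdis j k)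
      (fun j _ k _ => hadj j k), prod_apply]
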